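/- Let f : ℝⁿ → (−∞,+∞] be a polyhedral (convex piecewise linear, lsc, proper) function, x̄ ∈ dom f, and v̄ ∈ ∂f(x̄). Then the second subderivative of f at x̄ for v̄ is the indicator function of the critical cone: d²f(x̄ | v̄)(w) = 0 if df(x̄)(w) = ⟨v̄, w⟩, and +∞ otherwise. -/

import Mathlib

open Filter Topology Matrix

noncomputable section

abbrev Mat (m n : ℕ) := Matrix (Fin m) (Fin n) ℝ

namespace Paper

/-- Frobenius (trace) inner product on real matrices. -/
def finner {m n : ℕ} (X Y : Mat m n) : ℝ := ∑ i, ∑ j, X i j * Y i j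

/-- Frobenius norm. -/
def fnorm {m n : ℕ} (X : Mat m n) : ℝ := Real.sqrt (finner X X)

/-- Euclidean inner product on `ℝⁿ`. -/
def vinner {n : ℕ} (x y : Fin n → ℝ) : ℝ := ∑ i, x i * y i

/-- Euclidean norm on `ℝⁿ`. -/
def vnorm {n : ℕ} (x : Fin n → ℝ) : ℝ := Real.sqrt (vinner x x)

/-- Eigenvalues of a real symmetric matrix, arranged in nonincreasing order. -/
def eigs {k : ℕ} (A : Matrix (Fin k) (Fin k) ℝ) (hA : A.IsHermitian) : Fin k → ℝ :=
  fun i => hA.eigenvalues (Tuple.sort (fun j => -(hA.eigenvalues j)) i)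

/-- Singular values of a real `m × n` matrix, arranged in nonincreasing order. -/
def svals {m n : ℕ} (X : Mat m n) : Fin n → ℝ :=
  fun i => Real.sqrt (eigs (Xᵀ * X) (by simpa [Matrix.conjTranspose_eq_transpose_of_trivial] using
    Matrix.isHermitian_conjTranspose_mul_self X) i)

/-- The `m × n` matrix with `x` on the diagonal and zeros elsewhere. -/
def mdiag {m n : ℕ} (x : Fin n → ℝ) : Mat m n :=
  fun i j => if (i : ℕ) = (j : ℕ) then x j else 0

/-- The symmetric block matrix `B(X) = [[0, X], [Xᵀ, 0]]`, reindexed over `Fin (m+n)`. -/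
def bmat {m n : ℕ} (X : Mat m n) : Matrix (Fin (m + n)) (Fin (m + n)) ℝ :=
  Matrix.reindex finSumFinEquiv finSumFinEquiv (Matrix.fromBlocks 0 X Xᵀ 0)

lemma bmat_isHermitian {m n : ℕ} (X : Mat m n) : (bmat X).IsHermitian := by
  rw [Matrix.IsHermitian]
  ext i j
  simp only [bmat, Matrix.conjTranspose_apply, Matrix.reindex_apply, Matrix.submatrix_apply,
    star_trivial]
  rcases hi : finSumFinEquiv.symm i with a | a <;> rcases hj : finSumFinEquiv.symm j with b | b <;>
    simp [Matrix.fromBlocks, Matrix.transpose_apply]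

/-- Eigenvalues of `B(X)` in nonincreasing order. -/
def beigs {m n : ℕ} (X : Mat m n) : Fin (m + n) → ℝ :=
  eigs (bmat X) (bmat_isHermitian X)

/-- `Q` is a signed permutation matrix. -/
def IsSignedPerm {n : ℕ} (Q : Matrix (Fin n) (Fin n) ℝ) : Prop :=
  ∃ (e : Equiv.Perm (Fin n)) (s : Fin n → ℝ), (∀ i, s i = 1 ∨ s i = -1) ∧
    ∀ i j, Q i j = if j = e i then s i else 0

/-- A set of vectors invariant under all signed permutations. -/
def AbsSymSet {n : ℕ} (K : Set (Fin n → ℝ)) : Prop :=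
  ∀ Q, IsSignedPerm Q → ∀ x ∈ K, Q.mulVec x ∈ K

/-- An extended-real-valued absolutely symmetric function. -/
def AbsSymFun {n : ℕ} (f : (Fin n → ℝ) → EReal) : Prop :=
  ∀ Q, IsSignedPerm Q → ∀ x, f (Q.mulVec x) = f x

/-- Euclidean distance from a point to a set in `ℝⁿ`. -/
def vdist {n : ℕ} (x : Fin n → ℝ) (K : Set (Fin n → ℝ)) : ℝ :=
  sInf ((fun y => vnorm (x - y)) '' K)

/-- Frobenius distance from a matrix to a set of matrices. -/
def mdist {m n : ℕ} (X : Mat m n) (Γ : Set (Mat m n)) : ℝ :=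
  sInf ((fun Y => fnorm (X - Y)) '' Γ)

section Variational

variable {E : Type*} [AddCommGroup E] [Module ℝ E] [TopologicalSpace E]

/-- The subderivative `dg(x)(w) = liminf_{t↓0, w'→w} (g(x+tw') - g(x))/t`. -/
def subderiv (g : E → EReal) (x w : E) : EReal :=
  liminf (fun p : ℝ × E => ((p.1⁻¹ : ℝ) : EReal) * (g (x + p.1 • p.2) - g x))
    ((𝓝[>] (0 : ℝ)) ×ˢ 𝓝 w)

/-- The second-order difference quotient `Δ²_τ g(x | v)(w)`. -/
def secondQuot (ip : E → E → ℝ) (g : E → EReal) (x v : E) (τ : ℝ) (w : E) : EReal :=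
  ((2 / τ ^ 2 : ℝ) : EReal) * (g (x + τ • w) - g x - ((τ * ip v w : ℝ) : EReal))

/-- The second subderivative `d²g(x | v)(w)`. -/
def secondSubderiv (ip : E → E → ℝ) (g : E → EReal) (x v w : E) : EReal :=
  liminf (fun p : ℝ × E => secondQuot ip g x v p.1 p.2) ((𝓝[>] (0 : ℝ)) ×ˢ 𝓝 w)

/-- The parabolic difference quotient `Δ²_τ g(x)(w | z)`. -/
def parabQuot (g : E → EReal) (x w : E) (τ : ℝ) (z : E) : EReal :=
  ((2 / τ ^ 2 : ℝ) : EReal) *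
    (g (x + τ • w + (τ ^ 2 / 2) • z) - g x - ((τ : ℝ) : EReal) * subderiv g x w)

/-- The parabolic subderivative `d²g(x)(w | z)`. -/
def parabolicSubderiv (g : E → EReal) (x w z : E) : EReal :=
  liminf (fun p : ℝ × E => parabQuot g x w p.1 p.2) ((𝓝[>] (0 : ℝ)) ×ˢ 𝓝 z)

/-- Parabolic epi-differentiability of `g` at `x` for `w`. -/
def ParabEpiDiffAt (g : E → EReal) (x w : E) : Prop :=
  (∃ z, parabolicSubderiv g x w z < ⊤) ∧
  ∀ z : E, ∀ t : ℕ → ℝ, (∀ k, 0 < t k) → Tendsto t atTop (𝓝 0) →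
    ∃ zk : ℕ → E, Tendsto zk atTop (𝓝 z) ∧
      Tendsto (fun k => parabQuot g x w (t k) (zk k)) atTop (𝓝 (parabolicSubderiv g x w z))

/-- The (contingent) tangent cone to `C` at `x`. -/
def tangentConeOf (C : Set E) (x : E) : Set E :=
  {w | ∃ t : ℕ → ℝ, ∃ w' : ℕ → E, (∀ k, 0 < t k) ∧ Tendsto t atTop (𝓝 0) ∧
    Tendsto w' atTop (𝓝 w) ∧ ∀ k, x + t k • w' k ∈ C}

/-- The second-order tangent set to `C` at `x` for `w`. -/
def tangentCone2Of (C : Set E) (x w : E) : Set E :=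
  {u | ∃ t : ℕ → ℝ, ∃ u' : ℕ → E, (∀ k, 0 < t k) ∧ Tendsto t atTop (𝓝 0) ∧
    Tendsto u' atTop (𝓝 u) ∧ ∀ k, x + t k • w + (t k ^ 2 / 2) • u' k ∈ C}

/-- Parabolic derivability of the set `C` at `x` for `w`. -/
def ParabolicallyDerivable (C : Set E) (x w : E) : Prop :=
  (tangentCone2Of C x w).Nonempty ∧
  ∀ u ∈ tangentCone2Of C x w, ∃ ε > (0 : ℝ), ∃ ξ : ℝ → E,
    (∀ t ∈ Set.Icc (0 : ℝ) ε, ξ t ∈ C) ∧ ξ 0 = x ∧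
    Tendsto (fun t : ℝ => t⁻¹ • (ξ t - x)) (𝓝[>] 0) (𝓝 w) ∧
    Tendsto (fun t : ℝ => (2 / t ^ 2) • (ξ t - x - t • w)) (𝓝[>] 0) (𝓝 u)

/-- The convex subdifferential of `g` at `x` (w.r.t. the pairing `ip`). -/
def convSubdiff (ip : E → E → ℝ) (g : E → EReal) (x : E) : Set E :=
  {v | ∀ y, ((ip v (y - x) : ℝ) : EReal) + g x ≤ g y}

/-- Convexity for extended-real-valued functions. -/
def ConvexEReal (g : E → EReal) : Prop :=
  ∀ x y : E, ∀ t : ℝ, 0 ≤ t → t ≤ 1 →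
    g (t • x + (1 - t) • y) ≤ ((t : ℝ) : EReal) * g x + ((1 - t : ℝ) : EReal) * g y

end Variational

/-- Local Lipschitz continuity of `f` relative to its domain (everywhere on the domain). -/
def LocLipRelDom {n : ℕ} (f : (Fin n → ℝ) → EReal) : Prop :=
  ∀ x, f x ≠ ⊤ → ∃ l ≥ (0 : ℝ), ∃ U ∈ 𝓝 x, ∀ y ∈ U, ∀ z ∈ U, f y ≠ ⊤ → f z ≠ ⊤ →
    |(f y).toReal - (f z).toReal| ≤ l * vnorm (y - z)

/-- The columns of `U` with indices `r, r+1, …, k-1`. -/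
def colsFrom {k : ℕ} (r : ℕ) (U : Matrix (Fin k) (Fin k) ℝ) :
    Matrix (Fin k) (Fin (k - r)) ℝ :=
  fun i j => U i ⟨r + (j : ℕ), by have := j.isLt; omega⟩

/-- The first `r` columns of `U`. -/
def firstCols {k : ℕ} (r : ℕ) (h : r ≤ k) (U : Matrix (Fin k) (Fin k) ℝ) :
    Matrix (Fin k) (Fin r) ℝ :=
  fun i j => U i (Fin.castLE h j)

/-- The submatrix of `M` with rows `a ≤ · < b` and columns `c ≤ · < d`. -/
def subBlock {p q : ℕ} (M : Matrix (Fin p) (Fin q) ℝ) (a b c d : ℕ)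
    (h1 : b ≤ p) (h2 : d ≤ q) : Matrix (Fin (b - a)) (Fin (d - c)) ℝ :=
  fun i j => M ⟨a + (i : ℕ), by have := i.isLt; omega⟩ ⟨c + (j : ℕ), by have := j.isLt; omega⟩

/-- Nuclear norm: the sum of all singular values. -/
def nucNorm {m n : ℕ} (A : Mat m n) : ℝ := ∑ j, svals A j

/-- `Ψₙ(X) = σ_{r+1}(X) + ⋯ + σ_n(X)`, the sum of the `n - r` smallest singular values. -/
def psiN {m n : ℕ} (r : ℕ) (X : Mat m n) : ℝ :=
  ∑ s : Fin n, if r ≤ (s : ℕ) then svals X s else 0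

/-- The regular (Fréchet) subdifferential of a real-valued function on matrices. -/
def regSubdiff {m n : ℕ} (g : Mat m n → ℝ) (X : Mat m n) : Set (Mat m n) :=
  {V | ∀ ε > (0 : ℝ), ∀ᶠ Y in 𝓝 X, g X + finner V (Y - X) - ε * fnorm (Y - X) ≤ g Y}

/-- Two square matrices admit a simultaneous ordered spectral decomposition. -/
def SimSpec {k : ℕ} (A B : Matrix (Fin k) (Fin k) ℝ) : Prop :=
  ∃ (W : Matrix (Fin k) (Fin k) ℝ) (a b : Fin k → ℝ), Wᵀ * W = 1 ∧
    Antitone a ∧ Antitone b ∧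
    A = W * Matrix.diagonal a * Wᵀ ∧ B = W * Matrix.diagonal b * Wᵀ

/-- Two rectangular matrices admit a simultaneous ordered singular value decomposition. -/
def SimSVD {p q : ℕ} (A B : Matrix (Fin p) (Fin q) ℝ) : Prop :=
  ∃ (U : Matrix (Fin p) (Fin p) ℝ) (V : Matrix (Fin q) (Fin q) ℝ)
    (a b : Fin q → ℝ), Uᵀ * U = 1 ∧ Vᵀ * V = 1 ∧
    Antitone a ∧ Antitone b ∧ (∀ j, 0 ≤ a j) ∧ (∀ j, 0 ≤ b j) ∧
    A = U * mdiag (m := p) a * Vᵀ ∧ B = U * mdiag (m := p) b * Vᵀ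

end Paper

open Paper

/-- A proper polyhedral convex function: its epigraph is an intersection of finitely many
half-spaces (it is a polyhedral convex set). -/
def PolyhedralFun {n : ℕ} (f : (Fin n → ℝ) → EReal) : Prop :=
  (∀ x, f x ≠ ⊥) ∧ (∃ x, f x ≠ ⊤) ∧
  ∃ (k : ℕ) (a : Fin k → (Fin n → ℝ)) (c : Fin k → ℝ) (b : Fin k → ℝ),
    ∀ (x : Fin n → ℝ) (r : ℝ), f x ≤ (r : EReal) ↔ ∀ i, vinner (a i) x + c i * r ≤ b i

/-!
The epigraph of `f` is the polyhedron `{(y, r) | ⟨a i, y⟩ + c i * r ≤ b i}`. Its tangent cone at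
`(x, f x)` is cut out by the active constraints, and, the inactive ones having slack, every tangent
direction `(w, s)` is followed along a whole ray: `f (x + τ w) ≤ f x + τ s` for small `τ > 0`.
Hence `df(x)` is the lower semicontinuous function `g` whose epigraph is that cone, and
`f (x + τ w) = f x + τ g w` exactly for small `τ`. On the critical cone the second-order quotient
therefore vanishes along the ray, while the subgradient inequality keeps all quotients
nonnegative. Off it `⟨v, w⟩ < g w`; for `⟨v, w⟩ < α < g w` the quotient at `(τ, w')` near `(0, w)`
is at least `(2 / τ) (α - ⟨v, w'⟩) → ∞`.
-/

namespace EReal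

lemma coe_mul_sub_le_coe_iff {a b M : ℝ} (ha : 0 < a) {F : EReal} :
    (a : EReal) * (F - b) ≤ M ↔ F ≤ ((b + M / a : ℝ) : EReal) := by
  induction F using EReal.rec with
  | bot => simp only [bot_sub, mul_bot_of_pos (EReal.coe_pos.2 ha), bot_le]
  | top => simp only [top_sub_coe, mul_top_of_pos (EReal.coe_pos.2 ha), top_le_iff, coe_ne_top]
  | coe r =>
    norm_cast
    rw [← sub_le_iff_le_add', le_div_iff₀ ha, mul_comm]

lemma coe_le_coe_mul_sub_iff {a b M : ℝ} (ha : 0 < a) {F : EReal} :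
    (M : EReal) ≤ a * (F - b) ↔ ((b + M / a : ℝ) : EReal) ≤ F := by
  induction F using EReal.rec with
  | bot => simp only [bot_sub, mul_bot_of_pos (EReal.coe_pos.2 ha), le_bot_iff, coe_ne_bot]
  | top => simp only [top_sub_coe, mul_top_of_pos (EReal.coe_pos.2 ha), le_top]
  | coe r =>
    norm_cast
    rw [← le_sub_iff_add_le', div_le_iff₀ ha, mul_comm]

lemma sub_coe_sub_coe (F : EReal) (m t : ℝ) : F - m - t = F - ((m + t : ℝ) : EReal) := by
  induction F using EReal.rec with
  | bot => simp only [bot_sub]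
  | top => simp only [top_sub_coe]
  | coe r => norm_cast; ring

end EReal

section DifferenceQuotients

variable {E : Type*} [AddCommGroup E] [Module ℝ E] {f g : E → EReal} {x v : E} {m τ : ℝ}

lemma diffQuot_le_iff (hm : f x = m) (hτ : 0 < τ) (u : E) (s : ℝ) :
    ((τ⁻¹ : ℝ) : EReal) * (f (x + τ • u) - f x) ≤ s ↔
      f (x + τ • u) ≤ ((m + τ * s : ℝ) : EReal) := by
  rw [hm, EReal.coe_mul_sub_le_coe_iff (inv_pos.2 hτ), div_inv_eq_mul, mul_comm s]

lemma le_diffQuot_iff (hm : f x = m) (hτ : 0 < τ) (u : E) (s : ℝ) :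
    (s : EReal) ≤ ((τ⁻¹ : ℝ) : EReal) * (f (x + τ • u) - f x) ↔
      ((m + τ * s : ℝ) : EReal) ≤ f (x + τ • u) := by
  rw [hm, EReal.coe_le_coe_mul_sub_iff (inv_pos.2 hτ), div_inv_eq_mul, mul_comm s]

lemma secondQuot_le_iff (ip : E → E → ℝ) (hm : f x = m) (hτ : 0 < τ) (u : E) (M : ℝ) :
    secondQuot ip f x v τ u ≤ M ↔
      f (x + τ • u) ≤ ((m + τ * ip v u + τ ^ 2 / 2 * M : ℝ) : EReal) := by
  rw [secondQuot, hm, EReal.sub_coe_sub_coe, EReal.coe_mul_sub_le_coe_iff (by positivity),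
    div_div_eq_mul_div, mul_div_assoc, mul_comm M]

lemma le_secondQuot_iff (ip : E → E → ℝ) (hm : f x = m) (hτ : 0 < τ) (u : E) (M : ℝ) :
    (M : EReal) ≤ secondQuot ip f x v τ u ↔
      ((m + τ * ip v u + τ ^ 2 / 2 * M : ℝ) : EReal) ≤ f (x + τ • u) := by
  rw [secondQuot, hm, EReal.sub_coe_sub_coe, EReal.coe_le_coe_mul_sub_iff (by positivity),
    div_div_eq_mul_div, mul_div_assoc, mul_comm M]

lemma le_diffQuot_of_tangent
    (hm : f x = m)
    (hlow : ∀ τ > 0, ∀ u (s : ℝ), f (x + τ • u) ≤ ((m + τ * s : ℝ) : EReal) → g u ≤ s)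
    (hτ : 0 < τ) (u : E) : g u ≤ ((τ⁻¹ : ℝ) : EReal) * (f (x + τ • u) - f x) :=
  EReal.le_of_forall_lt_iff_le.1 fun s hs => hlow τ hτ u s ((diffQuot_le_iff hm hτ u s).1 hs.le)

end DifferenceQuotients

lemma liminf_le_of_eventually_le_on_ray {E : Type*} [TopologicalSpace E] {w : E}
    {F : ℝ × E → EReal} {c : EReal}
    (h : ∀ᶠ τ in 𝓝[>] (0 : ℝ), F (τ, w) ≤ c) : liminf F (𝓝[>] 0 ×ˢ 𝓝 w) ≤ c :=
  liminf_le_of_frequently_le' ((tendsto_id.prodMk tendsto_const_nhds).frequently h.frequently)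

section RayExpansion

variable {E : Type*} [AddCommGroup E] [Module ℝ E] [TopologicalSpace E]
  {f g : E → EReal} {x v w : E} {m : ℝ}

/-- `hlow` and `hup` say that the epigraph of `g` is the tangent cone of the epigraph of `f` at
`(x, m)`, and that the tangent directions `(w, s)` are followed by `f` along whole rays. -/
theorem subderiv_eq_of_tangent
    (hm : f x = m)
    (hlow : ∀ τ > 0, ∀ u (s : ℝ), f (x + τ • u) ≤ ((m + τ * s : ℝ) : EReal) → g u ≤ s)
    (hup : ∀ s : ℝ, g w ≤ s → ∀ᶠ τ in 𝓝[>] (0 : ℝ), f (x + τ • w) ≤ ((m + τ * s : ℝ) : EReal))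
    (hg : LowerSemicontinuousAt g w) : subderiv f x w = g w := by
  refine le_antisymm ?_ ?_
  · refine EReal.le_of_forall_lt_iff_le.1 fun s hs => liminf_le_of_eventually_le_on_ray ?_
    filter_upwards [hup s hs.le, self_mem_nhdsWithin] with τ hτs hτ
    exact (diffQuot_le_iff hm hτ w s).2 hτs
  · refine le_of_forall_lt_imp_le_of_dense fun y hy => le_liminf_of_le (by isBoundedDefault) ?_
    filter_upwards [eventually_mem_nhdsWithin.prod_inl _, (hg y hy).prod_inr _] with p hτ hyg
    exact hyg.le.trans (le_diffQuot_of_tangent hm hlow hτ p.2)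

lemma secondSubderiv_eq_zero_of_ray (ip : E → E → ℝ) (hm : f x = m)
    (hv : ∀ τ > 0, ∀ u, ((m + τ * ip v u : ℝ) : EReal) ≤ f (x + τ • u))
    (hw : ∀ᶠ τ in 𝓝[>] (0 : ℝ), f (x + τ • w) ≤ ((m + τ * ip v w : ℝ) : EReal)) :
    secondSubderiv ip f x v w = 0 := by
  refine le_antisymm (liminf_le_of_eventually_le_on_ray ?_)
    (le_liminf_of_le (by isBoundedDefault) ?_)
  · filter_upwards [hw, self_mem_nhdsWithin] with τ hτw hτ
    rw [← EReal.coe_zero, secondQuot_le_iff ip hm hτ]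
    simpa using hτw
  · filter_upwards [eventually_mem_nhdsWithin.prod_inl _] with p hτ
    rw [← EReal.coe_zero, le_secondQuot_iff ip hm hτ]
    simpa using hv p.1 hτ p.2

lemma secondSubderiv_eq_top_of_lt (ip : E → E → ℝ) (hm : f x = m)
    (hlow : ∀ τ > 0, ∀ u (s : ℝ), f (x + τ • u) ≤ ((m + τ * s : ℝ) : EReal) → g u ≤ s)
    (hg : LowerSemicontinuousAt g w) (hip : ContinuousAt (ip v) w) (hlt : (ip v w : EReal) < g w) :
    secondSubderiv ip f x v w = ⊤ := by
  obtain ⟨α, hvα, hαg⟩ := EReal.exists_between_coe_real hlt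
  norm_cast at hvα
  have hblow : Tendsto (fun p : ℝ × E => 2 * p.1⁻¹ * (α - ip v p.2)) (𝓝[>] 0 ×ˢ 𝓝 w) atTop :=
    ((tendsto_inv_nhdsGT_zero.const_mul_atTop two_pos).comp tendsto_fst).atTop_mul_pos
      (sub_pos.2 hvα) ((tendsto_const_nhds.sub hip.tendsto).comp tendsto_snd)
  refine (tendsto_nhds_top_mono (EReal.tendsto_coe_nhds_top_iff.2 hblow) ?_).liminf_eq
  filter_upwards [eventually_mem_nhdsWithin.prod_inl _, (hg α hαg).prod_inr _] with p hτ hαu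
  rw [le_secondQuot_iff ip hm hτ]
  have := (le_diffQuot_iff hm hτ p.2 α).1 (hαu.le.trans (le_diffQuot_of_tangent hm hlow hτ p.2))
  convert this using 2
  field_simp
  ring

theorem secondSubderiv_eq_indicator_of_tangent (ip : E → E → ℝ) (hm : f x = m)
    (hlow : ∀ τ > 0, ∀ u (s : ℝ), f (x + τ • u) ≤ ((m + τ * s : ℝ) : EReal) → g u ≤ s)
    (hup : ∀ s : ℝ, g w ≤ s → ∀ᶠ τ in 𝓝[>] (0 : ℝ), f (x + τ • w) ≤ ((m + τ * s : ℝ) : EReal))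
    (hg : LowerSemicontinuousAt g w) (hip : ContinuousAt (ip v) w)
    (hv : ∀ τ > 0, ∀ u, ((m + τ * ip v u : ℝ) : EReal) ≤ f (x + τ • u)) :
    secondSubderiv ip f x v w = if subderiv f x w = ip v w then 0 else ⊤ := by
  rw [subderiv_eq_of_tangent hm hlow hup hg]
  split_ifs with hcrit
  · exact secondSubderiv_eq_zero_of_ray ip hm hv (hup _ hcrit.le)
  have hvg : (ip v w : EReal) ≤ g w := by
    refine EReal.le_of_forall_lt_iff_le.1 fun s hs => ?_
    obtain ⟨τ, hτs, hτ : 0 < τ⟩ := ((hup s hs.le).and self_mem_nhdsWithin).exists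
    have := (hv τ hτ w).trans hτs
    norm_cast at this ⊢
    exact le_of_mul_le_mul_left (by linarith) hτ
  exact secondSubderiv_eq_top_of_lt ip hm hlow hg hip (hvg.lt_of_ne (Ne.symm hcrit))

end RayExpansion

section Polyhedral

variable {n k : ℕ} {f : (Fin n → ℝ) → EReal} {a : Fin k → Fin n → ℝ} {c b : Fin k → ℝ}
  {x : Fin n → ℝ} {m : ℝ}

lemma vinner_smul (u z : Fin n → ℝ) (t : ℝ) : vinner u (t • z) = t * vinner u z :=
  dotProduct_smul t u z

lemma vinner_add_smul (u y z : Fin n → ℝ) (t : ℝ) :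
    vinner u (y + t • z) = vinner u y + t * vinner u z :=
  (dotProduct_add u y (t • z)).trans (congrArg _ (vinner_smul u z t))

lemma continuous_vinner (u : Fin n → ℝ) : Continuous (vinner u) :=
  continuous_finsetSum _ fun i _ => continuous_const.mul (continuous_apply i)

lemma constraint_along_ray (p y u : Fin n → ℝ) (q r s τ : ℝ) :
    vinner p (y + τ • u) + q * (r + τ * s) = (vinner p y + q * r) + τ * (vinner p u + q * s) := by
  rw [vinner_add_smul]
  ring

lemma eventually_add_mul_le {P q K : ℝ} (hP : P ≤ q) (hK : P = q → K ≤ 0) :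
    ∀ᶠ τ in 𝓝[>] (0 : ℝ), P + τ * K ≤ q := by
  rcases hP.eq_or_lt with rfl | hlt
  · filter_upwards [self_mem_nhdsWithin] with τ hτ
    exact add_le_of_nonpos_right (mul_nonpos_of_nonneg_of_nonpos hτ.out.le (hK rfl))
  · have hlim : Tendsto (fun τ : ℝ => P + τ * K) (𝓝[>] 0) (𝓝 P) :=
      (Continuous.tendsto' (by fun_prop) 0 P (by simp)).mono_left nhdsWithin_le_nhds
    exact (hlim.eventually (eventually_lt_nhds hlt)).mono fun _ => le_of_lt

lemma coeff_nonpos_of_epigraph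
    (hepi : ∀ y (r : ℝ), f y ≤ r ↔ ∀ i, vinner (a i) y + c i * r ≤ b i) (hx : f x ≠ ⊤) (i : Fin k) :
    c i ≤ 0 := by
  obtain ⟨r₀, hr₀, -⟩ := EReal.exists_between_coe_real (lt_top_iff_ne_top.2 hx)
  by_contra! hci
  obtain ⟨r, hr, hbig⟩ := ((eventually_ge_atTop r₀).and
    ((tendsto_id.const_mul_atTop hci).eventually_gt_atTop (b i - vinner (a i) x))).exists
  have := (hepi x r).1 (hr₀.le.trans (EReal.coe_le_coe_iff.2 hr)) i
  simp only [id] at hbig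
  linarith

/-- `inf {s | p + c * s ≤ 0}` when `c ≤ 0`. -/
def affineThreshold (p c : ℝ) : EReal :=
  if c = 0 then (if p ≤ 0 then ⊥ else ⊤) else ((p / -c : ℝ) : EReal)

lemma affineThreshold_le_iff {p c : ℝ} (hc : c ≤ 0) (s : ℝ) :
    affineThreshold p c ≤ s ↔ p + c * s ≤ 0 := by
  unfold affineThreshold
  rcases hc.eq_or_lt with rfl | hc
  · rw [if_pos rfl, zero_mul, add_zero]
    split_ifs with hp <;> simp [hp]
  · rw [if_neg hc.ne, EReal.coe_le_coe_iff, div_le_iff₀ (neg_pos.2 hc)]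
    constructor <;> intro h <;> linarith

/-- The function whose epigraph is the tangent cone at `(x, m)` of the polyhedron
`{(y, r) | ⟨a i, y⟩ + c i * r ≤ b i for all i}`. -/
def polyDirDeriv (a : Fin k → Fin n → ℝ) (c b : Fin k → ℝ) (x : Fin n → ℝ) (m : ℝ)
    (u : Fin n → ℝ) : EReal :=
  ⨆ (i) (_ : vinner (a i) x + c i * m = b i), affineThreshold (vinner (a i) u) (c i)

lemma polyDirDeriv_le_iff (hc : ∀ i, c i ≤ 0) (u : Fin n → ℝ) (s : ℝ) :
    polyDirDeriv a c b x m u ≤ s ↔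
      ∀ i, vinner (a i) x + c i * m = b i → vinner (a i) u + c i * s ≤ 0 := by
  simp only [polyDirDeriv, iSup_le_iff, affineThreshold_le_iff (hc _)]

lemma polyDirDeriv_le_of_epigraph
    (hepi : ∀ y (r : ℝ), f y ≤ r ↔ ∀ i, vinner (a i) y + c i * r ≤ b i) (hc : ∀ i, c i ≤ 0)
    {τ : ℝ} (hτ : 0 < τ) (u : Fin n → ℝ) (s : ℝ) (h : f (x + τ • u) ≤ ((m + τ * s : ℝ) : EReal)) :
    polyDirDeriv a c b x m u ≤ s := by
  refine (polyDirDeriv_le_iff hc u s).2 fun i hi => ?_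
  have := (hepi _ _).1 h i
  rw [constraint_along_ray, hi, add_le_iff_nonpos_right] at this
  exact nonpos_of_mul_nonpos_right this hτ

lemma eventually_le_of_polyDirDeriv_le
    (hepi : ∀ y (r : ℝ), f y ≤ r ↔ ∀ i, vinner (a i) y + c i * r ≤ b i) (hc : ∀ i, c i ≤ 0)
    (hxm : f x ≤ m) {w : Fin n → ℝ} {s : ℝ} (h : polyDirDeriv a c b x m w ≤ s) :
    ∀ᶠ τ in 𝓝[>] (0 : ℝ), f (x + τ • w) ≤ ((m + τ * s : ℝ) : EReal) := by
  rw [polyDirDeriv_le_iff hc] at h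
  filter_upwards [eventually_all.2 fun i => eventually_add_mul_le ((hepi x m).1 hxm i) (h i)]
    with τ hτ
  exact (hepi _ _).2 fun i => by rw [constraint_along_ray]; exact hτ i

lemma lowerSemicontinuous_polyDirDeriv (hc : ∀ i, c i ≤ 0) :
    LowerSemicontinuous (polyDirDeriv a c b x m) := by
  intro w y hy
  obtain ⟨α, hyα, hαw⟩ := EReal.exists_between_coe_real hy
  obtain ⟨i, hi, hpos⟩ : ∃ i, vinner (a i) x + c i * m = b i ∧ 0 < vinner (a i) w + c i * α := by
    by_contra! h
    exact hαw.not_ge ((polyDirDeriv_le_iff hc w α).2 h)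
  have hcont : Continuous fun u => vinner (a i) u + c i * α :=
    (continuous_vinner (a i)).add continuous_const
  filter_upwards [hcont.continuousAt.eventually (lt_mem_nhds hpos)] with u hu
  exact hyα.trans (lt_of_not_ge fun hle => hu.not_ge ((polyDirDeriv_le_iff hc u α).1 hle i hi))

end Polyhedral

/-- For a polyhedral function `f`, `x̄ ∈ dom f` and `v̄ ∈ ∂f(x̄)`, the second subderivative
is the indicator of the critical cone: `d²f(x̄|v̄)(w) = 0` if `df(x̄)(w) = ⟨v̄,w⟩`,
and `+∞` otherwise. -/
theorem stmt12 {n : ℕ} (f : (Fin n → ℝ) → EReal) (hf : PolyhedralFun f)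
    (x : Fin n → ℝ) (hx : f x ≠ ⊤) (v : Fin n → ℝ)
    (hv : v ∈ convSubdiff vinner f x) (w : Fin n → ℝ) :
    secondSubderiv vinner f x v w =
      if subderiv f x w = ((vinner v w : ℝ) : EReal) then (0 : EReal) else ⊤ := by
  obtain ⟨hbot, -, k, a, c, b, hepi⟩ := hf
  have hm : f x = ((f x).toReal : EReal) := (EReal.coe_toReal hx (hbot x)).symm
  have hc := coeff_nonpos_of_epigraph hepi hx
  refine secondSubderiv_eq_indicator_of_tangent vinner hm
    (fun τ hτ u s => polyDirDeriv_le_of_epigraph hepi hc hτ u s)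
    (fun s => eventually_le_of_polyDirDeriv_le hepi hc hm.le)
    (lowerSemicontinuous_polyDirDeriv hc w) (continuous_vinner v).continuousAt fun τ _ u => ?_
  have := hv (x + τ • u)
  rwa [add_sub_cancel_left, vinner_smul, hm, ← EReal.coe_add, add_comm] at this
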